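/- arXiv:2111.04786 — 2 statements merged into one kernel-verified Lean document; each statement's English description precedes it below -/
import Mathlib

section
/- Let T, U be complex numbers with U ≠ 0, |TU| < 1 and |T U^{−1}| < 1. Then all of the following families are absolutely summable and the following identity holds: [∑_{a≥0, b∈ℤ, 2b−a≥0} T^{(4b+1−2a)(2a+1)} U^{4b+1−2a} − ∑_{a<0, b∈ℤ, 2b−a<0} T^{(4b+1−2a)(2a+1)} U^{4b+1−2a}] + [∑_{a≥0, b∈ℤ, 2b−a>0} T^{(4b−1−2a)(2a+1)} U^{4b−1−2a} − ∑_{a<0, b∈ℤ, 2b−a≤0} T^{(4b−1−2a)(2a+1)} U^{4b−1−2a}] = ∑_{a≥0, n≥0} T^{(2n+1)(2a+1)} U^{2n+1} − ∑_{a<0, n<0} T^{(2n+1)(2a+1)} U^{2n+1}. -/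
/-!
Writing `n = 2b − a`, the summand `T^{(4b+1−2a)(2a+1)} U^{4b+1−2a}` becomes
`T^{(2n+1)(2a+1)} U^{2n+1}` with `a + n` even, and `n = 2b − a − 1` turns the second summand into
the same expression with `a + n` odd. So each quadrant sum on the right splits, by the parity of
`a + n`, into the two corresponding sums on the left. Absolute convergence comes from `|T| < 1`
(as `|T|² = |TU| |TU⁻¹|`): for `a, n ≥ 0` the summand is bounded by `|T|^a |TU|^n`, and the
reflection `(a, n) ↦ (−a−1, −n−1)` exchanges the two quadrants and `U` with `U⁻¹`.
-/

/-- Summand of the first indefinite double sum (from (3.4)):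
`T^{(4b+1−2a)(2a+1)} U^{4b+1−2a}`, with `p = (a, b)`. -/
noncomputable def term₁ (T U : ℂ) (p : ℤ × ℤ) : ℂ :=
  T ^ ((4 * p.2 + 1 - 2 * p.1) * (2 * p.1 + 1)) * U ^ (4 * p.2 + 1 - 2 * p.1)

/-- Summand of the second indefinite double sum (from (3.5)):
`T^{(4b−1−2a)(2a+1)} U^{4b−1−2a}`, with `p = (a, b)`. -/
noncomputable def term₂ (T U : ℂ) (p : ℤ × ℤ) : ℂ :=
  T ^ ((4 * p.2 - 1 - 2 * p.1) * (2 * p.1 + 1)) * U ^ (4 * p.2 - 1 - 2 * p.1)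

/-- Summand of the combined indefinite double sum (from (3.8)):
`T^{(2n+1)(2a+1)} U^{2n+1}`, with `p = (a, n)`. -/
noncomputable def term₃ (T U : ℂ) (p : ℤ × ℤ) : ℂ :=
  T ^ ((2 * p.2 + 1) * (2 * p.1 + 1)) * U ^ (2 * p.2 + 1)

open Function Set

section Reindexing

variable {α β γ E : Type*} [AddCommGroup E] [UniformSpace E] [IsUniformAddGroup E]
  [CompleteSpace E] {f : α → E}

theorem Summable.subtype_comp_of_injective {φ : β → α} (hφ : Injective φ) {p : α → Prop}
    {q : β → Prop} (hpq : ∀ b, q b → p (φ b)) (hf : Summable fun a : {a // p a} => f a) :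
    Summable fun b : {b // q b} => f (φ b) :=
  hf.comp_injective (i := fun b : {b // q b} => (⟨φ b, hpq b b.2⟩ : {a // p a}))
    fun _ _ h => Subtype.ext (hφ (congrArg Subtype.val h))

theorem tsum_comp_add_tsum_comp_of_isCompl_range [T2Space E] (hf : Summable f) {φ : β → α}
    {ψ : γ → α} (hφ : Injective φ) (hψ : Injective ψ) (h : IsCompl (range φ) (range ψ)) :
    ∑' b, f (φ b) + ∑' c, f (ψ c) = ∑' a, f a :=
  ((hφ.hasSum_range_iff.2 (hf.comp_injective hφ).hasSum).add_isCompl h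
    (hψ.hasSum_range_iff.2 (hf.comp_injective hψ).hasSum)).tsum_eq.symm

theorem tsum_subtype_comp_add_tsum_subtype_comp [T2Space E] {φ : β → α} {ψ : γ → α}
    (hφ : Injective φ) (hψ : Injective ψ) (h : IsCompl (range φ) (range ψ))
    {p : α → Prop} {q : β → Prop} {r : γ → Prop} (hq : ∀ b, q b ↔ p (φ b))
    (hr : ∀ c, r c ↔ p (ψ c)) (hf : Summable fun a : {a // p a} => f a) :
    ∑' b : {b // q b}, f (φ b) + ∑' c : {c // r c}, f (ψ c) = ∑' a : {a // p a}, f a := by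
  obtain rfl : q = fun b => p (φ b) := funext fun b => propext (hq b)
  obtain rfl : r = fun c => p (ψ c) := funext fun c => propext (hr c)
  have hφs : ∑' b : {b // p (φ b)}, f (φ b) = ∑' b, {a | p a}.indicator f (φ b) :=
    tsum_subtype (φ ⁻¹' {a | p a}) (f ∘ φ)
  have hψs : ∑' c : {c // p (ψ c)}, f (ψ c) = ∑' c, {a | p a}.indicator f (ψ c) :=
    tsum_subtype (ψ ⁻¹' {a | p a}) (f ∘ ψ)
  rw [hφs, hψs, tsum_comp_add_tsum_comp_of_isCompl_range
    (summable_subtype_iff_indicator (s := {a | p a}).1 hf) hφ hψ h]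
  exact (tsum_subtype {a | p a} f).symm

end Reindexing

theorem norm_lt_one_of_norm_mul_lt_one_of_norm_mul_inv_lt_one {𝕜 : Type*} [NormedField 𝕜]
    {x y : 𝕜} (hy : y ≠ 0) (h₁ : ‖x * y‖ < 1) (h₂ : ‖x * y⁻¹‖ < 1) : ‖x‖ < 1 := by
  have : ‖x‖ ^ 2 < 1 :=
    calc ‖x‖ ^ 2 = ‖x * y‖ * ‖x * y⁻¹‖ := by
          rw [← norm_mul, ← norm_pow]; congr 1; field_simp
      _ < 1 := mul_lt_one_of_nonneg_of_lt_one_left (norm_nonneg _) h₁ h₂.le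
  exact (sq_lt_one_iff₀ (norm_nonneg x)).1 this

def reindex₁ (p : ℤ × ℤ) : ℤ × ℤ := (p.1, 2 * p.2 - p.1)

def reindex₂ (p : ℤ × ℤ) : ℤ × ℤ := (p.1, 2 * p.2 - p.1 - 1)

def reflect (p : ℤ × ℤ) : ℤ × ℤ := (-p.1 - 1, -p.2 - 1)

theorem reindex₁_injective : Injective reindex₁ := by
  intro p q h
  simp only [reindex₁, Prod.mk.injEq] at h
  ext <;> omega

theorem reindex₂_injective : Injective reindex₂ := by
  intro p q h
  simp only [reindex₂, Prod.mk.injEq] at h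
  ext <;> omega

theorem reflect_injective : Injective reflect := by
  intro p q h
  simp only [reflect, Prod.mk.injEq] at h
  ext <;> omega

theorem mem_range_reindex₁ (q : ℤ × ℤ) : q ∈ range reindex₁ ↔ (q.1 + q.2) % 2 = 0 := by
  constructor
  · rintro ⟨p, rfl⟩
    simp only [reindex₁]
    omega
  · intro h
    exact ⟨(q.1, (q.1 + q.2) / 2), Prod.ext rfl (by dsimp only [reindex₁]; omega)⟩

theorem mem_range_reindex₂ (q : ℤ × ℤ) : q ∈ range reindex₂ ↔ (q.1 + q.2) % 2 = 1 := by
  constructor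
  · rintro ⟨p, rfl⟩
    simp only [reindex₂]
    omega
  · intro h
    exact ⟨(q.1, (q.1 + q.2 + 1) / 2), Prod.ext rfl (by dsimp only [reindex₂]; omega)⟩

theorem isCompl_range_reindex : IsCompl (range reindex₁) (range reindex₂) := by
  refine ⟨Set.disjoint_left.2 fun q h₁ h₂ => ?_, codisjoint_iff.2 <| eq_univ_of_forall fun q => ?_⟩
  · rw [mem_range_reindex₁] at h₁
    rw [mem_range_reindex₂] at h₂
    omega
  · show q ∈ range reindex₁ ∪ range reindex₂
    rw [mem_union, mem_range_reindex₁, mem_range_reindex₂]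
    omega

theorem term₁_eq_term₃_reindex₁ (T U : ℂ) (p : ℤ × ℤ) :
    term₁ T U p = term₃ T U (reindex₁ p) := by
  simp only [term₁, term₃, reindex₁]
  congr 2 <;> ring

theorem term₂_eq_term₃_reindex₂ (T U : ℂ) (p : ℤ × ℤ) :
    term₂ T U p = term₃ T U (reindex₂ p) := by
  simp only [term₂, term₃, reindex₂]
  congr 2 <;> ring

theorem term₃_inv_reflect (T U : ℂ) (p : ℤ × ℤ) : term₃ T U⁻¹ (reflect p) = term₃ T U p := by
  simp only [term₃, reflect]
  rw [inv_zpow', show -(2 * (-p.2 - 1) + 1) = 2 * p.2 + 1 by ring]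
  congr 2
  ring

theorem term₃_natCast (T V : ℂ) (a n : ℕ) :
    term₃ T V (a, n) = (T * V) ^ (2 * n + 1) * T ^ (2 * a * (2 * n + 1)) := by
  have h₁ : (2 * (n : ℤ) + 1) * (2 * a + 1) = ((2 * n + 1) * (2 * a + 1) : ℕ) := by push_cast; ring
  have h₂ : 2 * (n : ℤ) + 1 = (2 * n + 1 : ℕ) := by push_cast; ring
  rw [term₃, h₁, h₂, zpow_natCast, zpow_natCast]
  ring

theorem norm_term₃_natCast_le {T V : ℂ} (hT : ‖T‖ ≤ 1) (hTV : ‖T * V‖ ≤ 1) (a n : ℕ) :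
    ‖term₃ T V (a, n)‖ ≤ ‖T‖ ^ a * ‖T * V‖ ^ n := by
  rw [term₃_natCast, norm_mul, norm_pow, norm_pow, mul_comm (‖T * V‖ ^ _)]
  exact mul_le_mul (pow_le_pow_of_le_one (norm_nonneg _) hT (by nlinarith))
    (pow_le_pow_of_le_one (norm_nonneg _) hTV (by omega)) (by positivity) (by positivity)

theorem summable_term₃_natCast {T V : ℂ} (hT : ‖T‖ < 1) (hTV : ‖T * V‖ < 1) :
    Summable fun p : ℕ × ℕ => term₃ T V (p.1, p.2) :=
  .of_norm_bounded
    ((summable_geometric_of_lt_one (norm_nonneg _) hT).mul_of_nonneg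
      (summable_geometric_of_lt_one (norm_nonneg _) hTV) (fun _ => by positivity)
      (fun _ => by positivity))
    fun p => norm_term₃_natCast_le hT.le hTV.le p.1 p.2

theorem summable_term₃_nonneg_quadrant {T V : ℂ} (hT : ‖T‖ < 1) (hTV : ‖T * V‖ < 1) :
    Summable fun p : {p : ℤ × ℤ // 0 ≤ p.1 ∧ 0 ≤ p.2} => term₃ T V p.1 := by
  have hinj : Injective fun p : {p : ℤ × ℤ // 0 ≤ p.1 ∧ 0 ≤ p.2} =>
      (p.1.1.toNat, p.1.2.toNat) := by
    rintro ⟨p, hp⟩ ⟨q, hq⟩ h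
    simp only [Prod.mk.injEq] at h
    exact Subtype.ext (show p = q from Prod.ext (by omega) (by omega))
  refine ((summable_term₃_natCast hT hTV).comp_injective hinj).congr fun ⟨p, hp₁, hp₂⟩ => ?_
  simp only [comp_apply, Int.toNat_of_nonneg hp₁, Int.toNat_of_nonneg hp₂]

theorem summable_term₃_neg_quadrant {T V : ℂ} (hT : ‖T‖ < 1) (hTV : ‖T * V⁻¹‖ < 1) :
    Summable fun p : {p : ℤ × ℤ // p.1 < 0 ∧ p.2 < 0} => term₃ T V p.1 := by
  refine ((summable_term₃_nonneg_quadrant hT hTV).subtype_comp_of_injective reflect_injective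
    fun p hp => ?_).congr fun p => term₃_inv_reflect T V p
  exact show 0 ≤ -p.1 - 1 ∧ 0 ≤ -p.2 - 1 by omega

theorem reindexing_identity (T U : ℂ) (hU : U ≠ 0)
    (h1 : ‖T * U‖ < 1) (h2 : ‖T * U⁻¹‖ < 1) :
    Summable (fun p : {p : ℤ × ℤ // 0 ≤ p.1 ∧ 0 ≤ 2 * p.2 - p.1} => term₁ T U p.1) ∧
    Summable (fun p : {p : ℤ × ℤ // p.1 < 0 ∧ 2 * p.2 - p.1 < 0} => term₁ T U p.1) ∧
    Summable (fun p : {p : ℤ × ℤ // 0 ≤ p.1 ∧ 0 < 2 * p.2 - p.1} => term₂ T U p.1) ∧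
    Summable (fun p : {p : ℤ × ℤ // p.1 < 0 ∧ 2 * p.2 - p.1 ≤ 0} => term₂ T U p.1) ∧
    Summable (fun p : {p : ℤ × ℤ // 0 ≤ p.1 ∧ 0 ≤ p.2} => term₃ T U p.1) ∧
    Summable (fun p : {p : ℤ × ℤ // p.1 < 0 ∧ p.2 < 0} => term₃ T U p.1) ∧
    ((∑' p : {p : ℤ × ℤ // 0 ≤ p.1 ∧ 0 ≤ 2 * p.2 - p.1}, term₁ T U p.1)
        - (∑' p : {p : ℤ × ℤ // p.1 < 0 ∧ 2 * p.2 - p.1 < 0}, term₁ T U p.1))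
      + ((∑' p : {p : ℤ × ℤ // 0 ≤ p.1 ∧ 0 < 2 * p.2 - p.1}, term₂ T U p.1)
        - (∑' p : {p : ℤ × ℤ // p.1 < 0 ∧ 2 * p.2 - p.1 ≤ 0}, term₂ T U p.1))
      = (∑' p : {p : ℤ × ℤ // 0 ≤ p.1 ∧ 0 ≤ p.2}, term₃ T U p.1)
        - (∑' p : {p : ℤ × ℤ // p.1 < 0 ∧ p.2 < 0}, term₃ T U p.1) := by
  have hT := norm_lt_one_of_norm_mul_lt_one_of_norm_mul_inv_lt_one hU h1 h2
  have hP := summable_term₃_nonneg_quadrant hT h1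
  have hN := summable_term₃_neg_quadrant hT h2
  have hP₂ : ∀ p : ℤ × ℤ, (0 ≤ p.1 ∧ 0 < 2 * p.2 - p.1) ↔ (0 ≤ p.1 ∧ 0 ≤ 2 * p.2 - p.1 - 1) :=
    fun p => by omega
  have hN₂ : ∀ p : ℤ × ℤ, (p.1 < 0 ∧ 2 * p.2 - p.1 ≤ 0) ↔ (p.1 < 0 ∧ 2 * p.2 - p.1 - 1 < 0) :=
    fun p => by omega
  simp only [term₁_eq_term₃_reindex₁, term₂_eq_term₃_reindex₂]
  refine ⟨hP.subtype_comp_of_injective reindex₁_injective fun _ => id,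
    hN.subtype_comp_of_injective reindex₁_injective fun _ => id,
    hP.subtype_comp_of_injective reindex₂_injective fun p => (hP₂ p).1,
    hN.subtype_comp_of_injective reindex₂_injective fun p => (hN₂ p).1, hP, hN, ?_⟩
  rw [← tsum_subtype_comp_add_tsum_subtype_comp reindex₁_injective reindex₂_injective
      isCompl_range_reindex (q := fun p => 0 ≤ p.1 ∧ 0 ≤ 2 * p.2 - p.1) (fun _ => Iff.rfl) hP₂ hP,
    ← tsum_subtype_comp_add_tsum_subtype_comp reindex₁_injective reindex₂_injective
      isCompl_range_reindex (q := fun p => p.1 < 0 ∧ 2 * p.2 - p.1 < 0) (fun _ => Iff.rfl) hN₂ hN]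
  ring
end

section
/- For nonzero complex numbers x, y define the rational function Z_{x,y}(u) := (1−xu)(1−yu)(1−x²yu)(1−xy²u) / ((1−u)(1−xyu)²(1−x²y²u)). Let x, y, w be complex numbers with x ≠ 0, y ≠ 0, 0 < |w| < 1, and assume that (1 − w^{2n−1}·xy) ≠ 0, (1 − w^{2n−1}·(xy)^{−1}) ≠ 0 for all n ≥ 1 and that (1 − (xy)^{−1} w^{2a}) ≠ 0, (1 − xy·w^{2a}) ≠ 0 for all a ≥ 1. Then all infinite products below converge and ∏_{n≥1} [(1−w^{2n})^4/(1−w^n)²] · [(1−w^{2n}·xy)(1−w^{2n}·(xy)^{−1})] / [(1−w^{2n−1}·xy)(1−w^{2n−1}·(xy)^{−1})] · ∏_{a≥1} Z_{x,y}((xy)^{−1} w^{2a})² = ∏_{n≥1} (1−x^{−1}w^{2n})²(1−y^{−1}w^{2n})²(1−x·w^{2n})²(1−y·w^{2n})² / [(1−(xy)^{−1}w^n)(1−w^n)²(1−xy·w^n)]. -/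
/-!
Substituting `(xy)⁻¹u` into `Z_{x,y}` gives `Z_{x,y}((xy)⁻¹u) = N(u) / D(u)` with
`N(u) = (1 - x⁻¹u)(1 - y⁻¹u)(1 - xu)(1 - yu)` and `D(u) = (1 - (xy)⁻¹u)(1 - u)²(1 - xyu)`.
At `u = w^{2n}` the factor `D(u)²` cancels against `(1 - w^{2n})⁴(1 - xyw^{2n})(1 - (xy)⁻¹w^{2n})`
except for one copy of `E(w^{2n})`, where `E(t) = (1 - xyt)(1 - (xy)⁻¹t)`. Together with the
factors `E(w^{2n-1})` of the first product these regroup, by splitting exponents into even and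
odd ones, into `∏_{m ≥ 1} E(w^m)`, which is the remaining part of the right-hand side.
All products converge because every factor is `1 + O(|w|^n)`.
-/

/-- Göttsche's local factor `Z_{x,y}(u)` for the Hodge polynomials of Hilbert schemes of
points on a surface with `e(X) = (1+xy)(1−x)(1−y)`. -/
noncomputable def Zxy (x y u : ℂ) : ℂ :=
  ((1 - x * u) * (1 - y * u) * (1 - x ^ 2 * y * u) * (1 - x * y ^ 2 * u)) /
    ((1 - u) * (1 - x * y * u) ^ 2 * (1 - x ^ 2 * y ^ 2 * u))

section NormedField

variable {𝕜 : Type*} [NormedField 𝕜]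

lemma summable_norm_mul_pow_of_le {w : 𝕜} (hw : ‖w‖ < 1) (c : 𝕜) {e : ℕ → ℕ}
    (he : ∀ n, n ≤ e n) : Summable fun n ↦ ‖c * w ^ e n‖ := by
  refine .of_nonneg_of_le (fun _ ↦ norm_nonneg _) (fun n ↦ ?_)
    ((summable_geometric_of_lt_one (norm_nonneg w) hw).mul_left ‖c‖)
  rw [norm_mul, norm_pow]
  exact mul_le_mul_of_nonneg_left (pow_le_pow_of_le_one (norm_nonneg w) hw.le (he n))
    (norm_nonneg c)

lemma one_sub_pow_ne_zero {w : 𝕜} (hw : ‖w‖ < 1) {k : ℕ} (hk : k ≠ 0) : 1 - w ^ k ≠ 0 :=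
  sub_ne_zero.mpr <| ne_of_apply_ne norm <| by
    rw [norm_one, norm_pow]
    exact (pow_lt_one₀ (norm_nonneg w) hw hk).ne'

variable [CompleteSpace 𝕜] {ι : Type*} {f : ι → 𝕜}

lemma multipliable_one_sub_of_summable (hf : Summable (‖f ·‖)) :
    Multipliable fun i ↦ 1 - f i := by
  simpa [sub_eq_add_neg] using multipliable_one_add_of_summable (f := (-f ·)) (by simpa using hf)

lemma multipliable_inv_one_sub_of_summable (hf : Summable (‖f ·‖)) :
    Multipliable fun i ↦ (1 - f i)⁻¹ := by
  by_cases h : ∃ i, 1 - f i = 0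
  · exact multipliable_of_exists_eq_zero (h.imp fun i hi ↦ by rw [hi, inv_zero])
  · rw [not_exists] at h
    refine (multipliable_one_sub_of_summable hf).inv₀ ?_
    simpa [sub_eq_add_neg] using tprod_one_add_ne_zero_of_summable (f := (-f ·))
      (by simpa [sub_eq_add_neg] using h) (by simpa using hf)

lemma multipliable_one_sub_mul_pow {w : 𝕜} (hw : ‖w‖ < 1) (c : 𝕜) {e : ℕ → ℕ}
    (he : ∀ n, n ≤ e n) : Multipliable fun n ↦ 1 - c * w ^ e n :=
  multipliable_one_sub_of_summable (summable_norm_mul_pow_of_le hw c he)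

lemma multipliable_inv_one_sub_mul_pow {w : 𝕜} (hw : ‖w‖ < 1) (c : 𝕜) {e : ℕ → ℕ}
    (he : ∀ n, n ≤ e n) : Multipliable fun n ↦ (1 - c * w ^ e n)⁻¹ :=
  multipliable_inv_one_sub_of_summable (summable_norm_mul_pow_of_le hw c he)

lemma multipliable_one_sub_pow {w : 𝕜} (hw : ‖w‖ < 1) {e : ℕ → ℕ} (he : ∀ n, n ≤ e n) :
    Multipliable fun n ↦ 1 - w ^ e n := by
  simpa only [one_mul] using multipliable_one_sub_mul_pow hw 1 he

lemma multipliable_inv_one_sub_pow {w : 𝕜} (hw : ‖w‖ < 1) {e : ℕ → ℕ} (he : ∀ n, n ≤ e n) :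
    Multipliable fun n ↦ (1 - w ^ e n)⁻¹ := by
  simpa only [one_mul] using multipliable_inv_one_sub_mul_pow hw 1 he

lemma multipliable_inv_one_sub_mul_pow_mul_one_sub_inv_mul_pow {w : 𝕜} (hw : ‖w‖ < 1) (c : 𝕜)
    {e : ℕ → ℕ} (he : ∀ n, n ≤ e n) :
    Multipliable fun n ↦ ((1 - c * w ^ e n) * (1 - c⁻¹ * w ^ e n))⁻¹ := by
  simpa only [mul_inv] using
    (multipliable_inv_one_sub_mul_pow hw c he).mul (multipliable_inv_one_sub_mul_pow hw c⁻¹ he)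

end NormedField

lemma multipliable_and_tprod_mul_tprod_eq_of_even_odd {M : Type*} [CommMonoid M]
    [TopologicalSpace M] [ContinuousMul M] [T2Space M] {a b c g r : ℕ → M}
    (ha : Multipliable a) (hb : Multipliable b) (hc : Multipliable c)
    (he : Multipliable fun k ↦ g (2 * k)) (ho : Multipliable fun k ↦ g (2 * k + 1))
    (hab : ∀ n, a n * b n = c n * (g (2 * n) * g (2 * n + 1))) (hr : ∀ n, r n = c n * g n) :
    Multipliable r ∧ (∏' n, a n) * ∏' n, b n = ∏' n, r n := by
  have hg := he.even_mul_odd ho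
  refine ⟨(hc.mul hg).congr fun n ↦ (hr n).symm, ?_⟩
  rw [← ha.tprod_mul hb, tprod_congr hab, hc.tprod_mul (he.mul ho), he.tprod_mul ho,
    tprod_even_mul_odd he ho, ← hc.tprod_mul hg, tprod_congr hr]

lemma Zxy_inv_mul {x y : ℂ} (hx : x ≠ 0) (hy : y ≠ 0) (u : ℂ) :
    Zxy x y ((x * y)⁻¹ * u) =
      (1 - x⁻¹ * u) * (1 - y⁻¹ * u) * (1 - x * u) * (1 - y * u) /
        ((1 - (x * y)⁻¹ * u) * (1 - u) ^ 2 * (1 - x * y * u)) := by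
  unfold Zxy
  congr 1 <;> field_simp

lemma mul_Zxy_inv_mul_sq {x y u t p : ℂ} (hx : x ≠ 0) (hy : y ≠ 0) (hu : 1 - u ≠ 0) :
    (1 - u) ^ 4 / (1 - p) ^ 2 * ((1 - u * (x * y)) * (1 - u * (x * y)⁻¹)) /
        ((1 - t * (x * y)) * (1 - t * (x * y)⁻¹)) * Zxy x y ((x * y)⁻¹ * u) ^ 2 =
      ((1 - x⁻¹ * u) * (1 - y⁻¹ * u) * (1 - x * u) * (1 - y * u) * (1 - p)⁻¹) ^ 2 *
        (((1 - x * y * t) * (1 - (x * y)⁻¹ * t))⁻¹ *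
          ((1 - x * y * u) * (1 - (x * y)⁻¹ * u))⁻¹) := by
  rw [Zxy_inv_mul hx hy]
  field_simp

lemma multipliable_Zxy_inv_mul_pow_sq {x y w : ℂ} (hx : x ≠ 0) (hy : y ≠ 0) (hw : ‖w‖ < 1) :
    Multipliable fun a : ℕ ↦ Zxy x y ((x * y)⁻¹ * w ^ (2 * (a + 1))) ^ 2 := by
  have he (n : ℕ) : n ≤ 2 * (n + 1) := by omega
  refine ((multipliable_one_sub_mul_pow hw x⁻¹ he).mul (multipliable_one_sub_mul_pow hw y⁻¹ he)
    |>.mul (multipliable_one_sub_mul_pow hw x he) |>.mul (multipliable_one_sub_mul_pow hw y he)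
    |>.mul (multipliable_inv_one_sub_mul_pow hw (x * y)⁻¹ he)
    |>.mul ((multipliable_inv_one_sub_pow hw he).pow 2)
    |>.mul (multipliable_inv_one_sub_mul_pow hw (x * y) he) |>.pow 2).congr fun n ↦ ?_
  rw [Zxy_inv_mul hx hy]
  simp only [div_eq_mul_inv, mul_inv, ← inv_pow]
  ring

lemma multipliable_one_sub_pow_quotient {w : ℂ} (hw : ‖w‖ < 1) (c : ℂ) :
    Multipliable fun n : ℕ ↦
      ((1 - w ^ (2 * (n + 1))) ^ 4 / (1 - w ^ (n + 1)) ^ 2) *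
        ((1 - w ^ (2 * (n + 1)) * c) * (1 - w ^ (2 * (n + 1)) * c⁻¹)) /
        ((1 - w ^ (2 * n + 1) * c) * (1 - w ^ (2 * n + 1) * c⁻¹)) := by
  have he (n : ℕ) : n ≤ 2 * (n + 1) := by omega
  refine ((multipliable_one_sub_pow hw he).pow 4
    |>.mul ((multipliable_inv_one_sub_pow hw (e := (· + 1)) (by omega)).pow 2)
    |>.mul (multipliable_one_sub_mul_pow hw c he) |>.mul (multipliable_one_sub_mul_pow hw c⁻¹ he)
    |>.mul (multipliable_inv_one_sub_mul_pow_mul_one_sub_inv_mul_pow hw c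
      (e := (2 * · + 1)) (by omega))).congr fun n ↦ ?_
  simp only [div_eq_mul_inv, mul_inv, ← inv_pow]
  ring

theorem infinite_product_manipulation_general (x y w : ℂ) (hx : x ≠ 0) (hy : y ≠ 0)
    (hw1 : ‖w‖ < 1) :
    Multipliable (fun n : ℕ =>
      ((1 - w ^ (2 * (n + 1))) ^ 4 / (1 - w ^ (n + 1)) ^ 2) *
        ((1 - w ^ (2 * (n + 1)) * (x * y)) * (1 - w ^ (2 * (n + 1)) * (x * y)⁻¹)) /
        ((1 - w ^ (2 * n + 1) * (x * y)) * (1 - w ^ (2 * n + 1) * (x * y)⁻¹))) ∧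
    Multipliable (fun a : ℕ => (Zxy x y ((x * y)⁻¹ * w ^ (2 * (a + 1)))) ^ 2) ∧
    Multipliable (fun n : ℕ =>
      ((1 - x⁻¹ * w ^ (2 * (n + 1))) ^ 2 * (1 - y⁻¹ * w ^ (2 * (n + 1))) ^ 2 *
          (1 - x * w ^ (2 * (n + 1))) ^ 2 * (1 - y * w ^ (2 * (n + 1))) ^ 2) /
        ((1 - (x * y)⁻¹ * w ^ (n + 1)) * (1 - w ^ (n + 1)) ^ 2 *
          (1 - x * y * w ^ (n + 1)))) ∧
    (∏' n : ℕ,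
        ((1 - w ^ (2 * (n + 1))) ^ 4 / (1 - w ^ (n + 1)) ^ 2) *
          ((1 - w ^ (2 * (n + 1)) * (x * y)) * (1 - w ^ (2 * (n + 1)) * (x * y)⁻¹)) /
          ((1 - w ^ (2 * n + 1) * (x * y)) * (1 - w ^ (2 * n + 1) * (x * y)⁻¹))) *
      (∏' a : ℕ, (Zxy x y ((x * y)⁻¹ * w ^ (2 * (a + 1)))) ^ 2)
      = ∏' n : ℕ,
          ((1 - x⁻¹ * w ^ (2 * (n + 1))) ^ 2 * (1 - y⁻¹ * w ^ (2 * (n + 1))) ^ 2 *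
              (1 - x * w ^ (2 * (n + 1))) ^ 2 * (1 - y * w ^ (2 * (n + 1))) ^ 2) /
            ((1 - (x * y)⁻¹ * w ^ (n + 1)) * (1 - w ^ (n + 1)) ^ 2 *
              (1 - x * y * w ^ (n + 1))) := by
  have hodd (n : ℕ) : n ≤ 2 * n + 1 := by omega
  have heven (n : ℕ) : n ≤ 2 * (n + 1) := by omega
  have hG {e : ℕ → ℕ} (he : ∀ n, n ≤ e n) :=
    multipliable_inv_one_sub_mul_pow_mul_one_sub_inv_mul_pow hw1 (x * y) he
  have hC : Multipliable fun n : ℕ ↦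
      ((1 - x⁻¹ * w ^ (2 * (n + 1))) * (1 - y⁻¹ * w ^ (2 * (n + 1))) *
        (1 - x * w ^ (2 * (n + 1))) * (1 - y * w ^ (2 * (n + 1))) * (1 - w ^ (n + 1))⁻¹) ^ 2 :=
    (multipliable_one_sub_mul_pow hw1 x⁻¹ heven).mul (multipliable_one_sub_mul_pow hw1 y⁻¹ heven)
      |>.mul (multipliable_one_sub_mul_pow hw1 x heven)
      |>.mul (multipliable_one_sub_mul_pow hw1 y heven)
      |>.mul (multipliable_inv_one_sub_pow hw1 Nat.le_succ) |>.pow 2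
  have hA := multipliable_one_sub_pow_quotient hw1 (x * y)
  have hB := multipliable_Zxy_inv_mul_pow_sq hx hy hw1
  refine ⟨hA, hB, multipliable_and_tprod_mul_tprod_eq_of_even_odd hA hB hC (hG hodd) (hG heven)
    (g := fun n ↦ ((1 - x * y * w ^ (n + 1)) * (1 - (x * y)⁻¹ * w ^ (n + 1)))⁻¹)
    (fun n ↦ mul_Zxy_inv_mul_sq hx hy (one_sub_pow_ne_zero hw1 (by omega))) fun n ↦ ?_⟩
  simp only [div_eq_mul_inv, mul_inv, ← inv_pow]
  ring

theorem infinite_product_manipulation (x y w : ℂ) (hx : x ≠ 0) (hy : y ≠ 0)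
    (hw0 : 0 < ‖w‖) (hw1 : ‖w‖ < 1)
    (h1 : ∀ n : ℕ, 1 - w ^ (2 * n + 1) * (x * y) ≠ 0)
    (h2 : ∀ n : ℕ, 1 - w ^ (2 * n + 1) * (x * y)⁻¹ ≠ 0)
    (h3 : ∀ a : ℕ, 1 - (x * y)⁻¹ * w ^ (2 * (a + 1)) ≠ 0)
    (h4 : ∀ a : ℕ, 1 - x * y * w ^ (2 * (a + 1)) ≠ 0) :
    Multipliable (fun n : ℕ =>
      ((1 - w ^ (2 * (n + 1))) ^ 4 / (1 - w ^ (n + 1)) ^ 2) *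
        ((1 - w ^ (2 * (n + 1)) * (x * y)) * (1 - w ^ (2 * (n + 1)) * (x * y)⁻¹)) /
        ((1 - w ^ (2 * n + 1) * (x * y)) * (1 - w ^ (2 * n + 1) * (x * y)⁻¹))) ∧
    Multipliable (fun a : ℕ => (Zxy x y ((x * y)⁻¹ * w ^ (2 * (a + 1)))) ^ 2) ∧
    Multipliable (fun n : ℕ =>
      ((1 - x⁻¹ * w ^ (2 * (n + 1))) ^ 2 * (1 - y⁻¹ * w ^ (2 * (n + 1))) ^ 2 *
          (1 - x * w ^ (2 * (n + 1))) ^ 2 * (1 - y * w ^ (2 * (n + 1))) ^ 2) /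
        ((1 - (x * y)⁻¹ * w ^ (n + 1)) * (1 - w ^ (n + 1)) ^ 2 *
          (1 - x * y * w ^ (n + 1)))) ∧
    (∏' n : ℕ,
        ((1 - w ^ (2 * (n + 1))) ^ 4 / (1 - w ^ (n + 1)) ^ 2) *
          ((1 - w ^ (2 * (n + 1)) * (x * y)) * (1 - w ^ (2 * (n + 1)) * (x * y)⁻¹)) /
          ((1 - w ^ (2 * n + 1) * (x * y)) * (1 - w ^ (2 * n + 1) * (x * y)⁻¹))) *
      (∏' a : ℕ, (Zxy x y ((x * y)⁻¹ * w ^ (2 * (a + 1)))) ^ 2)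
      = ∏' n : ℕ,
          ((1 - x⁻¹ * w ^ (2 * (n + 1))) ^ 2 * (1 - y⁻¹ * w ^ (2 * (n + 1))) ^ 2 *
              (1 - x * w ^ (2 * (n + 1))) ^ 2 * (1 - y * w ^ (2 * (n + 1))) ^ 2) /
            ((1 - (x * y)⁻¹ * w ^ (n + 1)) * (1 - w ^ (n + 1)) ^ 2 *
              (1 - x * y * w ^ (n + 1))) :=
  infinite_product_manipulation_general x y w hx hy hw1
end
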